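/- arXiv:2401.04272 — 4 statements merged into one kernel-verified Lean document; each statement's English description precedes it below -/
import Mathlib

section
/- The distributional LS-category is a homotopy invariant: if a space X homotopy dominates a space Y (i.e., there exist continuous maps f : X → Y and g : Y → X with f ∘ g homotopic to the identity of Y), then dcat(Y) ≤ dcat(X). In particular, homotopy equivalent spaces have equal dcat. -/
open MeasureTheory unitInterval

noncomputable section

/-- The path space `P(X)`: all continuous maps `[0,1] → X`, with the compact-open topology. -/
abbrev PathSp (X : Type*) [TopologicalSpace X] := C(unitInterval, X)

noncomputable instance (X : Type*) [TopologicalSpace X] : MeasurableSpace (PathSp X) := borel _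
instance (X : Type*) [TopologicalSpace X] : BorelSpace (PathSp X) := ⟨rfl⟩

/-- `μ` is a probability measure supported on at most `k` paths from `x` to `y`. -/
def DistPaths {X : Type*} [TopologicalSpace X] (k : ℕ) (x y : X)
    (μ : ProbabilityMeasure (PathSp X)) : Prop :=
  ∃ S : Finset (PathSp X), S.card ≤ k ∧ (∀ φ ∈ S, φ 0 = x ∧ φ 1 = y) ∧
    (μ : Measure (PathSp X)) ((↑S : Set (PathSp X))ᶜ) = 0

/-- The distributional LS-category: the minimal `k` such that `X` admits a
`(k+1)`-distributed contraction to a point. -/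
def dcat (X : Type*) [TopologicalSpace X] : ℕ∞ :=
  sInf {c : ℕ∞ | ∃ k : ℕ, c = k ∧ ∃ (x0 : X) (H : C(X, ProbabilityMeasure (PathSp X))),
    ∀ x, DistPaths (k + 1) x x0 (H x)}

/-- The distributional topological complexity: the minimal `n` such that `X` admits an
`(n+1)`-distributed navigation algorithm. -/
def dTC (X : Type*) [TopologicalSpace X] : ℕ∞ :=
  sInf {c : ℕ∞ | ∃ n : ℕ, c = n ∧ ∃ s : C(X × X, ProbabilityMeasure (PathSp X)),
    ∀ x y, DistPaths (n + 1) x y (s (x, y))}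

end

/-! Let `H` contract `X` through measures on at most `k + 1` paths ending at `x₀`, and let `G` be
a homotopy from `f ∘ g` to `id`. For `y : Y`, push `H (g y)` forward along
`φ ↦ (G run backwards from y to f (g y)) ⬝ (f ∘ φ)`: this gives at most `k + 1` paths from `y` to
`f x₀`. The gluing map is continuous only on the closed set of pairs `(y, φ)` with `φ 0 = g y`,
but the measures live there, and that suffices for the pushforwards to vary continuously. -/

open Filter Topology Set BoundedContinuousFunction

lemma norm_integral_le_of_norm_le_on {Z E : Type*} [MeasurableSpace Z] [NormedAddCommGroup E]
    [NormedSpace ℝ E] {ν : Measure Z} [IsFiniteMeasure ν] {g : Z → E} (hg : Integrable g ν)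
    {U : Set Z} (hU : MeasurableSet U) {ε C : ℝ} (hε : ∀ z ∈ U, ‖g z‖ ≤ ε)
    (hC : ∀ z, ‖g z‖ ≤ C) :
    ‖∫ z, g z ∂ν‖ ≤ ε * ν.real U + C * ν.real Uᶜ := by
  rw [← integral_add_compl hU hg]
  exact (norm_add_le _ _).trans (add_le_add
    (norm_setIntegral_le_of_norm_le_const (measure_lt_top _ _) hε)
    (norm_setIntegral_le_of_norm_le_const (measure_lt_top _ _) fun z _ => hC z))

section WeakConvergence

variable {Y Z : Type*} [TopologicalSpace Y] [TopologicalSpace Z] [MeasurableSpace Z]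
  [OpensMeasurableSpace Z] [HasOuterApproxClosed Z]

lemma ProbabilityMeasure.tendsto_measureReal_of_tendsto_of_null {ι : Type*} {L : Filter ι}
    {μs : ι → ProbabilityMeasure Z} {μ : ProbabilityMeasure Z} (hμ : Tendsto μs L (𝓝 μ))
    {F : Set Z} (hF : IsClosed F) (h0 : (μ : Measure Z) F = 0) :
    Tendsto (fun i => (μs i : Measure Z).real F) L (𝓝 0) := by
  have hlimsup := ProbabilityMeasure.limsup_measure_closed_le_of_tendsto hμ hF
  rw [h0] at hlimsup
  have : Tendsto (fun i => (μs i : Measure Z) F) L (𝓝 0) :=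
    tendsto_order.2 ⟨fun a ha => absurd ha not_lt_zero,
      fun a ha => eventually_lt_of_limsup_lt (hlimsup.trans_lt ha)⟩
  exact (ENNReal.tendsto_toReal ENNReal.zero_ne_top).comp this

/-- By the tube lemma, `h (y, ·)` is uniformly close to `h (y₀, ·)` on a neighbourhood of `S`, and
by the portmanteau theorem the mass of `μ y` outside that neighbourhood tends to zero. -/
theorem ProbabilityMeasure.continuousAt_integral_of_isCompact_support
    {μ : Y → ProbabilityMeasure Z} {y₀ : Y} (hμ : ContinuousAt μ y₀)
    {S : Set Z} (hS : IsCompact S) (hS0 : (μ y₀ : Measure Z) Sᶜ = 0) (h : Y × Z →ᵇ ℝ) :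
    ContinuousAt (fun y => ∫ z, h (y, z) ∂(μ y : Measure Z)) y₀ := by
  have hint : ∀ y y', Integrable (fun z => h (y, z)) (μ y' : Measure Z) := fun y y' =>
    (h.compContinuous ⟨Prod.mk y, by fun_prop⟩).integrable _
  have hfixed : Tendsto (fun y => ∫ z, h (y₀, z) ∂(μ y : Measure Z)) (𝓝 y₀)
      (𝓝 (∫ z, h (y₀, z) ∂(μ y₀ : Measure Z))) :=
    ((ProbabilityMeasure.continuous_integral_boundedContinuousFunction
      (h.compContinuous ⟨Prod.mk y₀, by fun_prop⟩)).tendsto _).comp hμ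
  have hdiff : Tendsto (fun y => ∫ z, h (y, z) - h (y₀, z) ∂(μ y : Measure Z)) (𝓝 y₀)
      (𝓝 0) := by
    rw [Metric.tendsto_nhds]
    intro ε hε
    have hopen : IsOpen {p : Y × Z | ‖h p - h (y₀, p.2)‖ < ε / 2} :=
      isOpen_lt (by fun_prop) continuous_const
    obtain ⟨u, v, hu, hv, hy₀u, hSv, huv⟩ := generalized_tube_lemma isCompact_singleton hS hopen
      (by rintro ⟨y, z⟩ ⟨rfl : y = y₀, -⟩; simpa using half_pos hε)
    have hmass := (tendsto_measureReal_of_tendsto_of_null hμ hv.isClosed_compl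
      (measure_mono_null (compl_subset_compl.2 hSv) hS0)).const_mul (2 * ‖h‖)
    rw [mul_zero] at hmass
    filter_upwards [hu.mem_nhds (singleton_subset_iff.1 hy₀u),
      hmass.eventually (gt_mem_nhds (half_pos hε))] with y hyu hy
    have hv1 : (μ y : Measure Z).real v ≤ 1 := measureReal_le_one
    rw [dist_zero_right]
    calc ‖∫ z, h (y, z) - h (y₀, z) ∂(μ y : Measure Z)‖
        ≤ ε / 2 * (μ y : Measure Z).real v + 2 * ‖h‖ * (μ y : Measure Z).real vᶜ :=
          norm_integral_le_of_norm_le_on ((hint y y).sub (hint y₀ y)) hv.measurableSet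
            (fun z hz => (huv ⟨hyu, hz⟩).le)
            (fun z => two_mul ‖h‖ ▸ norm_sub_le_of_le (h.norm_coe_le_norm _) (h.norm_coe_le_norm _))
      _ < ε := by nlinarith [measureReal_nonneg (μ := (μ y : Measure Z)) (s := v)]
  rw [ContinuousAt, ← zero_add (∫ z, h (y₀, z) ∂(μ y₀ : Measure Z))]
  refine (hdiff.add hfixed).congr fun y => ?_
  rw [integral_sub (hint y y) (hint y₀ y), sub_add_cancel]

end WeakConvergence

section Extension

variable {α β : Type*}

open Classical in
noncomputable def extendByConst {C : Set α} (Ψ : C → β) (b : β) (a : α) : β :=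
  if h : a ∈ C then Ψ ⟨a, h⟩ else b

lemma extendByConst_of_mem {C : Set α} (Ψ : C → β) (b : β) {a : α} (h : a ∈ C) :
    extendByConst Ψ b a = Ψ ⟨a, h⟩ :=
  dif_pos h

variable {Y Z W : Type*} [TopologicalSpace Y] [TopologicalSpace Z] [MeasurableSpace Z]
  [OpensMeasurableSpace Z] [TopologicalSpace W] [MeasurableSpace W] [BorelSpace W]

lemma measurable_extendByConst_prodMk {C : Set (Y × Z)} (hC : IsClosed C) (Ψ : C(C, W))
    (w₀ : W) (y : Y) : Measurable fun z => extendByConst Ψ w₀ (y, z) := by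
  classical
  exact Measurable.dite (s := Prod.mk y ⁻¹' C) (f := fun z => Ψ ⟨(y, z), z.2⟩)
    (Ψ.continuous.comp ((continuous_const.prodMk continuous_subtype_val).subtype_mk _)).measurable
    measurable_const (hC.preimage (by fun_prop)).measurableSet

/-- Tietze extension reduces each test function `F` on `W` to a bounded continuous function on
`Y × Z` that agrees with `F ∘ Ψ` on `C`, hence on the supports. -/
theorem continuous_map_extendByConst [TopologicalSpace.PseudoMetrizableSpace Y]
    [TopologicalSpace.PseudoMetrizableSpace Z]
    {C : Set (Y × Z)} (hC : IsClosed C) (Ψ : C(C, W)) (w₀ : W) (μ : C(Y, ProbabilityMeasure Z))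
    (hsupp : ∀ y, ∃ S, IsCompact S ∧ (∀ z ∈ S, (y, z) ∈ C) ∧ (μ y : Measure Z) Sᶜ = 0) :
    Continuous fun y => (μ y).map (measurable_extendByConst_prodMk hC Ψ w₀ y).aemeasurable := by
  rw [ProbabilityMeasure.continuous_iff_forall_continuous_integral]
  intro F
  obtain ⟨h, -, hh⟩ := exists_norm_eq_domRestrict_eq_of_closed (F.compContinuous Ψ) hC
  have hΨ : ∀ p (hp : p ∈ C), h p = F (Ψ ⟨p, hp⟩) := fun p hp => DFunLike.congr_fun hh ⟨p, hp⟩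
  have hpush : ∀ y, ∫ w, F w ∂((μ y).map (measurable_extendByConst_prodMk hC Ψ w₀ y).aemeasurable)
      = ∫ z, h (y, z) ∂(μ y : Measure Z) := by
    intro y
    obtain ⟨S, -, hSC, hS0⟩ := hsupp y
    rw [ProbabilityMeasure.toMeasure_map, integral_map
      (measurable_extendByConst_prodMk hC Ψ w₀ y).aemeasurable F.continuous.aestronglyMeasurable]
    refine integral_congr_ae (Eventually.mono (mem_ae_iff.2 hS0) fun z hz => ?_)
    simp only [extendByConst_of_mem _ _ (hSC z hz), hΨ _ (hSC z hz)]
  simp only [hpush]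
  refine continuous_iff_continuousAt.2 fun y₀ => ?_
  obtain ⟨S, hS, -, hS0⟩ := hsupp y₀
  exact ProbabilityMeasure.continuousAt_integral_of_isCompact_support
    μ.continuous.continuousAt hS hS0 h

end Extension

lemma DistPaths.map {X X' : Type*} [TopologicalSpace X] [TopologicalSpace X'] [T2Space X']
    {k : ℕ} {x y : X} {x' y' : X'} {μ : ProbabilityMeasure (PathSp X)} (hμ : DistPaths k x y μ)
    {F : PathSp X → PathSp X'} (hF : Measurable F)
    (hFend : ∀ φ : PathSp X, φ 0 = x → φ 1 = y → F φ 0 = x' ∧ F φ 1 = y') :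
    DistPaths k x' y' (μ.map hF.aemeasurable) := by
  classical
  obtain ⟨S, hcard, hend, h0⟩ := hμ
  refine ⟨S.image F, Finset.card_image_le.trans hcard, ?_, ?_⟩
  · simp only [Finset.mem_image, forall_exists_index, and_imp]
    rintro _ φ hφ rfl
    exact hFend φ (hend φ hφ).1 (hend φ hφ).2
  · rw [ProbabilityMeasure.toMeasure_map,
      Measure.map_apply hF (S.image F).finite_toSet.measurableSet.compl]
    exact measure_mono_null (fun φ hφ hφS => hφ (Finset.mem_image_of_mem F hφS)) h0

section Homotopy

variable {X Y : Type*} [TopologicalSpace X] [TopologicalSpace Y] {f : C(X, Y)} {g : C(Y, X)}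

noncomputable def ContinuousMap.Homotopy.symmTransMap
    (G : (f.comp g).Homotopy (ContinuousMap.id Y)) :
    C({p : Y × PathSp X | p.2 0 = g p.1}, PathSp Y) where
  toFun p := ((G.evalAt p.1.1).symm.trans ⟨f.comp p.1.2, congrArg f p.2, rfl⟩).toContinuousMap
  continuous_toFun := by
    apply ContinuousMap.continuous_of_continuous_uncurry
    refine Path.trans_continuous_family
      (fun p : {p : Y × PathSp X | p.2 0 = g p.1} => (G.evalAt p.1.1).symm) ?_
      (fun p => ⟨f.comp p.1.2, congrArg f p.2, rfl⟩) ?_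
    · change Continuous fun q : {p : Y × PathSp X | p.2 0 = g p.1} × I => G (σ q.2, q.1.1.1)
      fun_prop
    · change Continuous fun q : {p : Y × PathSp X | p.2 0 = g p.1} × I => f (q.1.1.2 q.2)
      fun_prop

variable (G : (f.comp g).Homotopy (ContinuousMap.id Y))
  (p : {p : Y × PathSp X | p.2 0 = g p.1})

lemma ContinuousMap.Homotopy.symmTransMap_apply_zero : G.symmTransMap p 0 = p.1.1 :=
  Path.source _

lemma ContinuousMap.Homotopy.symmTransMap_apply_one : G.symmTransMap p 1 = f (p.1.2 1) :=
  Path.target _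

end Homotopy

theorem dcat_le_of_comp_homotopic_id {X Y : Type*} [MetricSpace X] [MetricSpace Y]
    (f : C(X, Y)) (g : C(Y, X)) (hfg : (f.comp g).Homotopic (ContinuousMap.id Y)) :
    dcat Y ≤ dcat X := by
  obtain ⟨G⟩ := hfg
  refine sInf_le_sInf ?_
  rintro _ ⟨k, rfl, x₀, H, hH⟩
  have hC : IsClosed {p : Y × PathSp X | p.2 0 = g p.1} :=
    isClosed_eq (by fun_prop) (by fun_prop)
  have hsupp : ∀ y, ∃ S, IsCompact S ∧ (∀ φ ∈ S, φ 0 = g y) ∧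
      (H (g y) : Measure (PathSp X)) Sᶜ = 0 := fun y =>
    let ⟨S, _, hS, h0⟩ := hH (g y)
    ⟨S, S.finite_toSet.isCompact, fun φ hφ => (hS φ hφ).1, h0⟩
  refine ⟨k, rfl, f x₀,
    ⟨_, continuous_map_extendByConst hC G.symmTransMap (.const _ (f x₀)) (H.comp g) hsupp⟩,
    fun y => (hH (g y)).map (measurable_extendByConst_prodMk hC _ _ y) fun φ hφ₀ hφ₁ => ?_⟩
  rw [extendByConst_of_mem _ _ (show (y, φ) ∈ _ from hφ₀)]
  exact ⟨G.symmTransMap_apply_zero _, (G.symmTransMap_apply_one _).trans (congrArg f hφ₁)⟩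

/-- Homotopy invariance of the distributional LS-category: if `X` homotopy dominates `Y`
(via `f : X → Y`, `g : Y → X` with `f ∘ g ≃ id`), then `dcat Y ≤ dcat X`; in particular,
homotopy equivalent spaces have the same `dcat`. -/
theorem dcat_homotopy_invariant :
    (∀ (X Y : Type) [MetricSpace X] [MetricSpace Y]
        [PathConnectedSpace X] [PathConnectedSpace Y]
        (f : C(X, Y)) (g : C(Y, X)),
        (f.comp g).Homotopic (ContinuousMap.id Y) → dcat Y ≤ dcat X) ∧
    (∀ (X Y : Type) [MetricSpace X] [MetricSpace Y]
        [PathConnectedSpace X] [PathConnectedSpace Y],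
        Nonempty (ContinuousMap.HomotopyEquiv X Y) → dcat X = dcat Y) :=
  ⟨fun _ _ _ _ _ _ f g hfg => dcat_le_of_comp_homotopic_id f g hfg,
    fun _ _ _ _ _ _ ⟨e⟩ => le_antisymm (dcat_le_of_comp_homotopic_id _ _ e.left_inv)
      (dcat_le_of_comp_homotopic_id _ _ e.right_inv)⟩
end

section
/- For every path-connected metric ANR space X, the distributional LS-category of X is at most the Lusternik–Schnirelmann category of X: dcat(X) ≤ cat(X). -/
open MeasureTheory unitInterval

/-- The subset `A ⊆ X` is contractible in `X`: the inclusion is null-homotopic. -/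
def NullhomotopicIn {X : Type*} [TopologicalSpace X] (A : Set X) : Prop :=
  ∃ x0 : X, ((ContinuousMap.id X).restrict A).Homotopic (ContinuousMap.const (↥A) x0)

/-- The Lusternik–Schnirelmann category: the least `n` such that `X` is covered by
`n+1` open sets, each contractible in `X`. -/
noncomputable def LScat (X : Type*) [TopologicalSpace X] : ℕ∞ :=
  sInf {c : ℕ∞ | ∃ n : ℕ, c = n ∧ ∃ U : Fin (n + 1) → Set X,
    (∀ i, IsOpen (U i)) ∧ (⋃ i, U i) = Set.univ ∧ ∀ i, NullhomotopicIn (U i)}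

/-!
Cover `X` by open sets `U₀, …, Uₙ`, each contractible in `X`. Running the contraction of `Uᵢ`
and then a fixed path to the base point `x₀` gives paths `γᵢ(x)` from `x` to `x₀` depending
continuously on `x ∈ Uᵢ`. For a partition of unity `ρ` subordinate to the cover,
`x ↦ ∑ ρᵢ(x) δ_{γᵢ(x)}` is an `(n+1)`-distributed contraction: it is continuous because the
`i`-th term vanishes on a neighbourhood of every point outside `Uᵢ`, where `γᵢ` is meaningless.
-/

section

variable {X : Type*} [TopologicalSpace X]

theorem NullhomotopicIn.exists_paths_to [PathConnectedSpace X] {A : Set X}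
    (hA : NullhomotopicIn A) (x₀ : X) :
    ∃ γ : C(A, PathSp X), ∀ a, γ a 0 = a ∧ γ a 1 = x₀ := by
  obtain ⟨x₁, ⟨F⟩⟩ := hA
  let p := PathConnectedSpace.somePath x₁ x₀
  have hcont := Path.trans_continuous_family (fun a : A => F.evalAt a)
    (F.continuous.comp continuous_swap) (fun _ => p) (p.continuous.comp continuous_snd)
  exact ⟨ContinuousMap.curry ⟨_, hcont⟩,
    fun a => ⟨((F.evalAt a).trans p).source, ((F.evalAt a).trans p).target⟩⟩

theorem ContinuousMap.exists_continuousOn_extend {Y : Type*} [TopologicalSpace Y] [Nonempty Y]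
    {A : Set X} (f : C(A, Y)) : ∃ g : X → Y, ContinuousOn g A ∧ ∀ a : A, g a = f a := by
  inhabit Y
  refine ⟨Function.extend Subtype.val f (fun _ => default), ?_, fun a =>
    Subtype.val_injective.extend_apply _ _ a⟩
  rw [continuousOn_iff_continuous_domRestrict]
  convert f.continuous using 1
  funext a
  exact Subtype.val_injective.extend_apply _ _ a

namespace PartitionOfUnity

variable {ι P : Type*} [Fintype ι] [MeasurableSpace P]

noncomputable def diracMixture (ρ : PartitionOfUnity ι X) (g : ι → X → P) (x : X) :
    FiniteMeasure P :=
  ∑ i, (ρ i x).toNNReal • (diracProba (g i x)).toFiniteMeasure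

variable (ρ : PartitionOfUnity ι X) (g : ι → X → P)

theorem sum_toNNReal_eq_one (x : X) : ∑ i, (ρ i x).toNNReal = 1 := by
  have h : ∑ i, ρ i x = 1 := by
    simpa [finsum_eq_sum_of_fintype] using ρ.sum_eq_one (Set.mem_univ x)
  apply NNReal.coe_injective
  simpa [Real.coe_toNNReal _ (ρ.nonneg _ x)] using h

theorem toMeasure_diracMixture_apply (x : X) {S : Set P} (hS : MeasurableSet S) :
    (ρ.diracMixture g x : Measure P) S = ∑ i, (ρ i x).toNNReal • S.indicator 1 (g i x) := by
  simp [diracMixture, hS]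

theorem mass_diracMixture (x : X) : (ρ.diracMixture g x).mass = 1 := by
  rw [← ENNReal.coe_inj, FiniteMeasure.ennreal_mass,
    ρ.toMeasure_diracMixture_apply g x MeasurableSet.univ]
  simp [← ENNReal.ofNNReal_finsetSum, ρ.sum_toNNReal_eq_one x]

theorem continuous_diracMixture [TopologicalSpace P] [OpensMeasurableSpace P] {U : ι → Set X}
    (hU : ∀ i, IsOpen (U i)) (hρ : ρ.IsSubordinate U) (hg : ∀ i, ContinuousOn (g i) (U i)) :
    Continuous (ρ.diracMixture g) := by
  refine continuous_finsetSum _ fun i _ => ?_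
  refine ContinuousOn.continuous_of_tsupport_subset ?_ (hU i) ?_
  · exact (continuous_real_toNNReal.comp (ρ i).continuous).continuousOn.smul
      (ProbabilityMeasure.toFiniteMeasure_continuous.comp_continuousOn
        (continuous_diracProba.comp_continuousOn (hg i)))
  · exact (tsupport_smul_subset_left _ _).trans
      ((tsupport_comp_subset Real.toNNReal_zero _).trans (hρ i))

theorem diracMixture_apply_compl_eq_zero (x : X) {S : Set P} (hS : MeasurableSet S)
    (hgS : ∀ i, ρ i x ≠ 0 → g i x ∈ S) : (ρ.diracMixture g x : Measure P) Sᶜ = 0 := by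
  rw [ρ.toMeasure_diracMixture_apply g x hS.compl]
  refine Finset.sum_eq_zero fun i _ => ?_
  by_cases hi : ρ i x = 0
  · simp [hi]
  · simp [hgS i hi]

noncomputable def diracMixtureProba (x : X) : ProbabilityMeasure P :=
  ⟨ρ.diracMixture g x, ⟨by rw [← FiniteMeasure.ennreal_mass, mass_diracMixture, ENNReal.coe_one]⟩⟩

theorem continuous_diracMixtureProba [TopologicalSpace P] [OpensMeasurableSpace P]
    {U : ι → Set X} (hU : ∀ i, IsOpen (U i)) (hρ : ρ.IsSubordinate U)
    (hg : ∀ i, ContinuousOn (g i) (U i)) : Continuous (ρ.diracMixtureProba g) :=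
  (ProbabilityMeasure.toFiniteMeasure_isEmbedding P).continuous_iff.mpr
    (ρ.continuous_diracMixture g hU hρ hg)

theorem distPaths_diracMixtureProba [T1Space X] (γ : ι → X → PathSp X) {x y : X}
    (hγ : ∀ i, ρ i x ≠ 0 → γ i x 0 = x ∧ γ i x 1 = y) :
    DistPaths (Fintype.card ι) x y (ρ.diracMixtureProba γ x) := by
  classical
  let S := {i | ρ i x ≠ 0}.toFinset.image (γ · x)
  refine ⟨S, Finset.card_image_le.trans (Finset.card_le_univ _), ?_,
    ρ.diracMixture_apply_compl_eq_zero γ x S.measurableSet fun i hi => ?_⟩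
  · simp only [S, Finset.mem_image, Set.mem_toFinset, Set.mem_ofPred_eq]
    rintro _ ⟨i, hi, rfl⟩
    exact hγ i hi
  · exact Finset.mem_image_of_mem _ (by simpa using hi)

end PartitionOfUnity

end

/-- `dcat X ≤ cat X` for a path-connected metric (ANR) space. -/
theorem dcat_le_LScat (X : Type*) [MetricSpace X] [PathConnectedSpace X] :
    dcat X ≤ LScat X := by
  refine le_sInf ?_
  rintro _ ⟨n, rfl, U, hUo, hUc, hUn⟩
  obtain ⟨x₀⟩ := PathConnectedSpace.nonempty (X := X)
  choose γ hγ using fun i => (hUn i).exists_paths_to x₀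
  have : Nonempty (PathSp X) := ⟨.const _ x₀⟩
  choose g hgU hgγ using fun i => (γ i).exists_continuousOn_extend
  obtain ⟨ρ, hρ⟩ := PartitionOfUnity.exists_isSubordinate isClosed_univ U hUo hUc.ge
  refine sInf_le ⟨n, rfl, x₀, ⟨_, ρ.continuous_diracMixtureProba g hUo hρ hgU⟩, fun x => ?_⟩
  simpa only [Fintype.card_fin, ContinuousMap.coe_mk] using
    ρ.distPaths_diracMixtureProba g fun i hi =>
      have hx : x ∈ U i := hρ i (subset_tsupport _ hi)
      hgγ i ⟨x, hx⟩ ▸ hγ i ⟨x, hx⟩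
end

section
/- For every path-connected metric ANR space X, dTC(X) ≤ TC(X), where TC is Farber's topological complexity. -/
open MeasureTheory unitInterval
open scoped ENNReal NNReal BoundedContinuousFunction

/-- Farber's topological complexity: the least `n` such that `X × X` is covered by `n+1`
open sets, over each of which the end-points fibration `P(X) → X × X` admits a continuous
section. -/
noncomputable def FarberTC (X : Type*) [TopologicalSpace X] : ℕ∞ :=
  sInf {c : ℕ∞ | ∃ n : ℕ, c = n ∧ ∃ U : Fin (n + 1) → Set (X × X),
    (∀ i, IsOpen (U i)) ∧ (⋃ i, U i) = Set.univ ∧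
    ∀ i, ∃ sec : C(↥(U i), PathSp X),
      ∀ z : ↥(U i), sec z 0 = (z : X × X).1 ∧ sec z 1 = (z : X × X).2}

/-! Given an open cover `U₀, …, Uₙ` of `X × X` with sections `sᵢ` of the end-points fibration
over `Uᵢ`, choose a partition of unity `ρᵢ` subordinate to it (`X × X` is metrizable, hence
paracompact) and send `(x, y)` to `∑ ρᵢ(x, y) δ_{sᵢ(x, y)}`. This is supported on at most `n + 1`
paths from `x` to `y`, and it is weakly continuous: the integral of a bounded continuous `f` is
`∑ ρᵢ · (f ∘ sᵢ)`, and each term is continuous because `sᵢ` is continuous on a neighbourhood of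
the support of `ρᵢ`. -/

namespace PartitionOfUnity

variable {ι Z Y : Type*} [Fintype ι] [TopologicalSpace Z] [MeasurableSpace Y]
  (ρ : PartitionOfUnity ι Z Set.univ) (p : ι → Z → Y)

lemma isProbabilityMeasure_sum_smul_dirac (z : Z) :
    IsProbabilityMeasure (∑ i, ENNReal.ofReal (ρ i z) • Measure.dirac (p i z)) := by
  constructor
  simp only [Measure.coe_finsetSum, Finset.sum_apply, Measure.smul_apply, measure_univ,
    smul_eq_mul, mul_one]
  rw [← ENNReal.ofReal_sum_of_nonneg fun i _ => ρ.nonneg i z, ← finsum_eq_sum_of_fintype,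
    ρ.sum_eq_one (Set.mem_univ z), ENNReal.ofReal_one]

/-- The probability measure `∑ i, ρ i z • δ_{p i z}`. -/
noncomputable def diracMix (z : Z) : ProbabilityMeasure Y :=
  ⟨_, ρ.isProbabilityMeasure_sum_smul_dirac p z⟩

lemma diracMix_apply_compl_eq_zero {z : Z} {s : Set Y} (hs : MeasurableSet s)
    (hp : ∀ i, ρ i z ≠ 0 → p i z ∈ s) : (ρ.diracMix p z : Measure Y) sᶜ = 0 := by
  change (∑ i, ENNReal.ofReal (ρ i z) • Measure.dirac (p i z)) sᶜ = 0
  rw [Measure.finsetSum_apply]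
  refine Finset.sum_eq_zero fun i _ => ?_
  by_cases hi : ρ i z = 0
  · simp [hi]
  · simp [Measure.dirac_apply' _ hs.compl, hp i hi]

lemma integral_diracMix [TopologicalSpace Y] [OpensMeasurableSpace Y] (f : Y →ᵇ ℝ) (z : Z) :
    ∫ y, f y ∂(ρ.diracMix p z : Measure Y) = ∑ᶠ i, ρ i z • f (p i z) := by
  rw [finsum_eq_sum_of_fintype]
  refine (integral_finsetSum_measure fun i _ => ?_).trans (Finset.sum_congr rfl fun i _ => ?_)
  · exact (f.integrable (Measure.dirac (p i z))).smul_measure ENNReal.ofReal_ne_top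
  · rw [integral_smul_measure, integral_dirac' _ _ f.continuous.stronglyMeasurable,
      ENNReal.toReal_ofReal (ρ.nonneg i z)]

variable {ρ p} in
lemma IsSubordinate.continuous_diracMix [TopologicalSpace Y] [OpensMeasurableSpace Y]
    {U : ι → Set Z} (hU : ∀ i, IsOpen (U i)) (hρ : ρ.IsSubordinate U)
    (hp : ∀ i, ContinuousOn (p i) (U i)) : Continuous (ρ.diracMix p) := by
  refine continuous_iff_continuousAt.2 fun z =>
    ProbabilityMeasure.tendsto_iff_forall_integral_tendsto.2 fun f => ?_
  simp only [integral_diracMix]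
  exact (hρ.continuous_finsum_smul hU fun i => f.continuous.comp_continuousOn (hp i)).continuousAt

end PartitionOfUnity

lemma distPaths_diracMix {ι X : Type*} [Fintype ι] [TopologicalSpace X] [T1Space X]
    (ρ : PartitionOfUnity ι (X × X) Set.univ) (p : ι → X × X → PathSp X) {x y : X}
    (hp : ∀ i, ρ i (x, y) ≠ 0 → p i (x, y) 0 = x ∧ p i (x, y) 1 = y) :
    DistPaths (Fintype.card ι) x y (ρ.diracMix p (x, y)) := by
  classical
  set S := (Finset.univ.filter fun i => ρ i (x, y) ≠ 0).image fun i => p i (x, y)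
  refine ⟨S, Finset.card_image_le.trans (Finset.card_filter_le _ _), ?_, ?_⟩
  · simp only [S, Finset.mem_image, Finset.mem_filter]
    rintro _ ⟨i, ⟨-, hi⟩, rfl⟩
    exact hp i hi
  · refine ρ.diracMix_apply_compl_eq_zero p S.finite_toSet.measurableSet fun i hi => ?_
    simp only [S, Finset.coe_image, Finset.coe_filter]
    exact ⟨i, by simpa using hi, rfl⟩

lemma exists_continuousOn_of_pathSection {X : Type*} [TopologicalSpace X] {U : Set (X × X)}
    (h : ∃ sec : C(U, PathSp X), ∀ z : U, sec z 0 = (z : X × X).1 ∧ sec z 1 = (z : X × X).2) :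
    ∃ p : X × X → PathSp X, ContinuousOn p U ∧ ∀ z ∈ U, p z 0 = z.1 ∧ p z 1 = z.2 := by
  classical
  obtain ⟨sec, hsec⟩ := h
  refine ⟨fun z => if hz : z ∈ U then sec ⟨z, hz⟩ else ContinuousMap.const _ z.1, ?_,
    fun z hz => by simpa [hz] using hsec ⟨z, hz⟩⟩
  rw [continuousOn_iff_continuous_domRestrict]
  convert sec.continuous using 1
  funext z
  simp [z.2]

theorem dTC_le_TC_general (X : Type*) [MetricSpace X] :
    dTC X ≤ FarberTC X := by
  refine le_sInf ?_
  rintro _ ⟨n, rfl, U, hUo, hUc, hsec⟩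
  choose p hpc hp using fun i => exists_continuousOn_of_pathSection (hsec i)
  obtain ⟨ρ, hρ⟩ := PartitionOfUnity.exists_isSubordinate isClosed_univ U hUo hUc.ge
  refine sInf_le ⟨n, rfl, ⟨_, hρ.continuous_diracMix hUo hpc⟩, fun x y => ?_⟩
  simpa using distPaths_diracMix ρ p fun i hi => hp i _ (hρ i (subset_tsupport _ hi))

/-- `dTC X ≤ TC X` for a path-connected metric (ANR) space. -/
theorem dTC_le_TC (X : Type*) [MetricSpace X] [PathConnectedSpace X] :
    dTC X ≤ FarberTC X :=
  dTC_le_TC_general X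
end

section
/- For a path-connected topological group X, dTC(X) = dcat(X). -/
open MeasureTheory unitInterval

/-!
Left translation carries a distributed contraction of `G` to a distributed navigation algorithm:
`s(x, y)` is the contraction measure at `x₀ y⁻¹ x`, pushed forward along left multiplication by
the constant path `y x₀⁻¹`. The one analytic point is the weak continuity of `s`, i.e. of
`(a, μ) ↦ (g a)_* μ` at a finitely supported `μ₀`: near the finitely many atoms `g a` is uniformly
close to `g a₀` (tube lemma), and away from them a cutoff function, which exists because
topological groups and their path spaces are completely regular, sees a mass tending to `0`.
Conversely, a navigation algorithm restricted to `y = x₀` is a contraction.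
-/

open Filter Topology BoundedContinuousFunction

theorem eventually_nhds_prod_nhdsSet_dist_lt {A X E : Type*} [TopologicalSpace A]
    [TopologicalSpace X] [PseudoMetricSpace E] {F : A × X → E} (hF : Continuous F) (a₀ : A)
    {K : Set X} (hK : IsCompact K) {δ : ℝ} (hδ : 0 < δ) :
    ∀ᶠ p in 𝓝 a₀ ×ˢ 𝓝ˢ K, dist (F p) (F (a₀, p.2)) < δ := by
  rw [← nhdsSet_singleton, ← isCompact_singleton.nhdsSet_prod_eq hK,
    eventually_nhdsSet_iff_forall]
  rintro ⟨a, x⟩ ⟨ha : a = a₀, -⟩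
  subst ha
  have hcont : Continuous fun p : A × X => dist (F p) (F (a, p.2)) :=
    hF.dist (hF.comp (continuous_const.prodMk continuous_snd))
  exact hcont.continuousAt.eventually_lt continuousAt_const (by simpa using hδ)

section Cutoff

variable {X : Type*} [TopologicalSpace X] [CompletelyRegularSpace X]

theorem CompletelyRegularSpace.exists_bcf_eq_zero_eqOn_one {x : X} {U : Set X} (hU : IsOpen U)
    (hx : x ∈ U) : ∃ φ : X →ᵇ ℝ, (∀ y, φ y ∈ Set.Icc 0 1) ∧ φ x = 0 ∧ Set.EqOn φ 1 Uᶜ := by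
  obtain ⟨f, hf, hfx, hfU⟩ := CompletelyRegularSpace.completely_regular_isOpen x U hU hx
  refine ⟨.mkOfBound ⟨fun y => f y, continuous_subtype_val.comp hf⟩ 1
      fun y z => Real.dist_le_of_mem_Icc_01 (f y).2 (f z).2,
    fun y => (f y).2, by simp [hfx], fun y hy => by simp [hfU hy]⟩

theorem CompletelyRegularSpace.exists_bcf_eqOn_zero_eqOn_one {S : Finset X} {U : Set X}
    (hU : U ∈ 𝓝ˢ (S : Set X)) :
    ∃ χ : X →ᵇ ℝ, (∀ y, χ y ∈ Set.Icc 0 1) ∧ Set.EqOn χ 0 S ∧ Set.EqOn χ 1 Uᶜ := by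
  have hS : (S : Set X) ⊆ interior U := subset_interior_iff_mem_nhdsSet.2 hU
  choose! φ hφ01 hφ0 hφ1 using fun s (hs : s ∈ S) =>
    exists_bcf_eq_zero_eqOn_one isOpen_interior (hS hs)
  refine ⟨∏ s ∈ S, φ s, fun y => ?_, fun s hs => ?_, fun y hy => ?_⟩ <;>
    simp only [BoundedContinuousFunction.prod_apply, Pi.zero_apply, Pi.one_apply]
  · exact ⟨Finset.prod_nonneg fun s hs => (hφ01 s hs y).1,
      Finset.prod_le_one (fun s hs => (hφ01 s hs y).1) fun s hs => (hφ01 s hs y).2⟩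
  · exact Finset.prod_eq_zero hs (hφ0 s hs)
  · exact Finset.prod_eq_one fun s hs => hφ1 s hs fun h => hy (interior_subset h)

theorem exists_nhds_bcf_forall_dist_le {A E : Type*} [TopologicalSpace A] [PseudoMetricSpace E]
    {F : A × X → E} (hF : Continuous F) {B : ℝ} (hB : ∀ p q, dist (F p) (F q) ≤ B) (a₀ : A)
    (S : Finset X) {δ : ℝ} (hδ : 0 < δ) :
    ∃ W ∈ 𝓝 a₀, ∃ χ : X →ᵇ ℝ, (∀ x, χ x ∈ Set.Icc 0 1) ∧ Set.EqOn χ 0 S ∧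
      ∀ a ∈ W, ∀ x, dist (F (a₀, x)) (F (a, x)) ≤ δ + B * χ x := by
  obtain ⟨W, hW, U, hU, hWU⟩ := mem_prod_iff.1 <|
    eventually_nhds_prod_nhdsSet_dist_lt hF a₀ S.finite_toSet.isCompact hδ
  obtain ⟨χ, hχ01, hχS, hχU⟩ := CompletelyRegularSpace.exists_bcf_eqOn_zero_eqOn_one hU
  refine ⟨W, hW, χ, hχ01, hχS, fun a ha x => ?_⟩
  by_cases hx : x ∈ U
  · have hclose : dist (F (a, x)) (F (a₀, x)) < δ := hWU (Set.mk_mem_prod ha hx)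
    rw [dist_comm]
    exact le_add_of_le_of_nonneg hclose.le
      (mul_nonneg (dist_self (F (a, x)) ▸ hB _ _) (hχ01 x).1)
  · rw [hχU hx, Pi.one_apply, mul_one]
    exact (hB _ _).trans (le_add_of_nonneg_left hδ.le)

end Cutoff

section PushforwardContinuity

variable {A X Y : Type*} [TopologicalSpace A] [TopologicalSpace X] [MeasurableSpace X]
  [OpensMeasurableSpace X] [TopologicalSpace Y] [MeasurableSpace Y] [BorelSpace Y]

theorem dist_integral_le_of_forall_dist_le {μ : Measure X} [IsFiniteMeasure μ]
    {u v : X →ᵇ ℝ} {w : X → ℝ} (hw : Integrable w μ) (h : ∀ x, dist (u x) (v x) ≤ w x) :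
    dist (∫ x, u x ∂μ) (∫ x, v x ∂μ) ≤ ∫ x, w x ∂μ := by
  rw [dist_eq_norm, ← integral_sub (u.integrable μ) (v.integrable μ)]
  exact norm_integral_le_of_norm_le hw (ae_of_all _ fun x => by simpa [dist_eq_norm] using h x)

theorem integral_map_curry (g : C(A × X, Y)) (a : A) (μ : ProbabilityMeasure X) (f : Y →ᵇ ℝ) :
    ∫ y, f y ∂(μ.map (g.curry a).continuous.aemeasurable : Measure Y) =
      ∫ x, f.compContinuous (g.curry a) x ∂(μ : Measure X) := by
  rw [ProbabilityMeasure.toMeasure_map,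
    integral_map (g.curry a).continuous.aemeasurable f.continuous.aestronglyMeasurable]
  rfl

variable [CompletelyRegularSpace X]

theorem ProbabilityMeasure.continuousAt_map_curry_of_finite_support (g : C(A × X, Y)) {a₀ : A}
    {μ₀ : ProbabilityMeasure X} {S : Finset X} (hS : (μ₀ : Measure X) (↑S)ᶜ = 0) :
    ContinuousAt (fun p : A × ProbabilityMeasure X =>
      p.2.map (g.curry p.1).continuous.aemeasurable) (a₀, μ₀) := by
  rw [ContinuousAt, ProbabilityMeasure.tendsto_iff_forall_integral_tendsto]
  intro f
  simp only [integral_map_curry]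
  refine (ProbabilityMeasure.tendsto_iff_forall_integral_tendsto.1 continuousAt_snd
    (f.compContinuous (g.curry a₀))).congr_dist (Metric.tendsto_nhds.2 fun ε hε => ?_)
  obtain ⟨W, hW, χ, hχ01, hχS, hclose⟩ := exists_nhds_bcf_forall_dist_le
    (F := fun p => f (g p)) (by fun_prop) (fun _ _ => f.dist_le_two_norm _ _) a₀ S (half_pos hε)
  -- `χ` vanishes on the support of `μ₀`, so its integral tends to `0` near `μ₀`
  have hχlim := ProbabilityMeasure.tendsto_iff_forall_integral_tendsto.1
    (continuousAt_snd (p := (a₀, μ₀))) χ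
  rw [integral_eq_zero_of_ae <| measure_mono_null (fun x hx hxS => hx (hχS hxS)) hS] at hχlim
  have hsmall : ∀ᶠ p : A × ProbabilityMeasure X in 𝓝 (a₀, μ₀),
      2 * ‖f‖ * ∫ x, χ x ∂(p.2 : Measure X) < ε / 2 := by
    refine (hχlim.const_mul (2 * ‖f‖)).eventually (gt_mem_nhds ?_)
    simpa using half_pos hε
  filter_upwards [hsmall, continuousAt_fst.preimage_mem_nhds hW] with p hp hpW
  rw [dist_zero_right, Real.norm_eq_abs, abs_of_nonneg dist_nonneg]
  calc _ ≤ ∫ x, (ε / 2 + 2 * ‖f‖ * χ x) ∂(p.2 : Measure X) :=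
        dist_integral_le_of_forall_dist_le
          ((integrable_const _).add ((χ.integrable _).const_mul _)) (hclose p.1 hpW)
    _ = ε / 2 + 2 * ‖f‖ * ∫ x, χ x ∂(p.2 : Measure X) := by
        rw [integral_add (integrable_const _) ((χ.integrable _).const_mul _), integral_const_mul]
        simp
    _ < ε := by linarith

end PushforwardContinuity

instance ContinuousMap.completelyRegularSpace_of_isTopologicalGroup {α G : Type*}
    [TopologicalSpace α] [TopologicalSpace G] [Group G] [IsTopologicalGroup G] :
    CompletelyRegularSpace C(α, G) :=
  -- compact convergence for the right uniformity of `G` induces the compact-open topology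
  letI := IsTopologicalGroup.rightUniformSpace G
  inferInstance

theorem DistPaths.map_homeomorph {X X' : Type*} [TopologicalSpace X] [TopologicalSpace X']
    {k : ℕ} {x y : X} {x' y' : X'} {μ : ProbabilityMeasure (PathSp X)} (h : DistPaths k x y μ)
    (T : PathSp X ≃ₜ PathSp X') (hT : ∀ φ : PathSp X, φ 0 = x → φ 1 = y → T φ 0 = x' ∧ T φ 1 = y') :
    DistPaths k x' y' (μ.map T.continuous.aemeasurable) := by
  classical
  obtain ⟨S, hcard, hends, hnull⟩ := h
  refine ⟨S.image T, Finset.card_image_le.trans hcard, ?_, ?_⟩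
  · simp only [Finset.mem_image]
    rintro _ ⟨φ, hφ, rfl⟩
    exact hT φ (hends φ hφ).1 (hends φ hφ).2
  · rw [ProbabilityMeasure.toMeasure_map, ← T.toMeasurableEquiv_coe, MeasurableEquiv.map_apply]
    exact measure_mono_null (fun φ hφ hφS => hφ (Finset.mem_image_of_mem _ hφS)) hnull

def HasDistContraction (X : Type*) [TopologicalSpace X] (k : ℕ) : Prop :=
  ∃ (x0 : X) (H : C(X, ProbabilityMeasure (PathSp X))), ∀ x, DistPaths (k + 1) x x0 (H x)

def HasDistNavigation (X : Type*) [TopologicalSpace X] (n : ℕ) : Prop :=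
  ∃ s : C(X × X, ProbabilityMeasure (PathSp X)), ∀ x y, DistPaths (n + 1) x y (s (x, y))

theorem HasDistNavigation.hasDistContraction {X : Type*} [TopologicalSpace X] [Nonempty X]
    {n : ℕ} (h : HasDistNavigation X n) : HasDistContraction X n := by
  obtain ⟨s, hs⟩ := h
  inhabit X
  exact ⟨default, s.comp ⟨fun x => (x, default), by fun_prop⟩, fun x => hs x default⟩

theorem HasDistContraction.hasDistNavigation {G : Type*} [TopologicalSpace G] [Group G]
    [IsTopologicalGroup G] {k : ℕ} (h : HasDistContraction G k) : HasDistNavigation G k := by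
  obtain ⟨x0, H, hH⟩ := h
  let c : C(G × G, PathSp G) :=
    ⟨fun p => .const _ (p.2 * x0⁻¹), ContinuousMap.continuous_const'.comp (by fun_prop)⟩
  let z : C(G × G, G) := ⟨fun p => x0 * p.2⁻¹ * p.1, by fun_prop⟩
  let g : C((G × G) × PathSp G, PathSp G) :=
    ⟨fun q => c q.1 * q.2, (c.continuous.comp continuous_fst).mul continuous_snd⟩
  have hs : Continuous fun p => (H (z p)).map (g.curry p).continuous.aemeasurable := by
    refine continuous_iff_continuousAt.2 fun p => ?_
    obtain ⟨S, -, -, hS⟩ := hH (z p)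
    exact (ProbabilityMeasure.continuousAt_map_curry_of_finite_support g hS).comp
      (f := fun q => (q, H (z q)))
      (continuousAt_id.prodMk (H.continuous.comp z.continuous).continuousAt)
  refine ⟨⟨_, hs⟩, fun x y => (hH (z (x, y))).map_homeomorph (Homeomorph.mulLeft (c (x, y))) ?_⟩
  intro φ h0 h1
  change y * x0⁻¹ * φ 0 = x ∧ y * x0⁻¹ * φ 1 = y
  rw [h0, h1]
  change y * x0⁻¹ * (x0 * y⁻¹ * x) = x ∧ y * x0⁻¹ * x0 = y
  constructor <;> group

theorem dTC_eq_dcat_of_topologicalGroup_general (G : Type) [TopologicalSpace G] [Group G]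
    [IsTopologicalGroup G] :
    dTC G = dcat G := by
  have h : ∀ n, HasDistNavigation G n ↔ HasDistContraction G n :=
    fun _ => ⟨HasDistNavigation.hasDistContraction, HasDistContraction.hasDistNavigation⟩
  change sInf {c : ℕ∞ | ∃ n : ℕ, c = n ∧ HasDistNavigation G n} =
    sInf {c : ℕ∞ | ∃ k : ℕ, c = k ∧ HasDistContraction G k}
  simp_rw [h]

/-- For a path-connected topological group, `dTC G = dcat G`. -/
theorem dTC_eq_dcat_of_topologicalGroup (G : Type) [TopologicalSpace G] [Group G]
    [IsTopologicalGroup G] [PathConnectedSpace G] :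
    dTC G = dcat G :=
  dTC_eq_dcat_of_topologicalGroup_general G
end
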